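/- arXiv:1703.03849 — 4 statements merged into one kernel-verified Lean document; each statement's English description precedes it below -/
import Mathlib

section
/- For every hypergraph H = (V, E) on n vertices with rank r (and n ≥ 1), there exists a function γ' : E → ℕ with γ'(e) ≥ 1 for all e such that (i) γ'(e) ≤ γ_H(e) for every edge e ∈ E, and (ii) ∑_{e ∈ E} 1/γ'(e) ≤ 8·r·(n − 1). In other words, every rank-r hypergraph admits an O(r)-approximate strength function. -/
/- A hypergraph on a finite vertex type `V` is given by a multiset `E` of edges,
each edge a `Finset V` (with at least 2 vertices, stated as a hypothesis). -/

variable {V : Type*} [Fintype V] [DecidableEq V]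

/-- `δ_H(A)`: the (multiset of) edges of `E` crossing the cut `A`. -/
def cutEdges (E : Multiset (Finset V)) (A : Finset V) : Multiset (Finset V) :=
  E.filter (fun e => (e ∩ A).Nonempty ∧ (e \ A).Nonempty)

/-- Edge multiset of the subhypergraph `H[U]` induced on `U`. -/
def induced (E : Multiset (Finset V)) (U : Finset V) : Multiset (Finset V) :=
  E.filter (fun e => e ⊆ U)

/-- Edge-connectivity `λ(H[U])`: the minimum number of edges of `H[U]` crossing a
nonempty proper subset `A ⊊ U`. -/
noncomputable def lam (E : Multiset (Finset V)) (U : Finset V) : ℕ :=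
  sInf {k : ℕ | ∃ A : Finset V, A ⊆ U ∧ A.Nonempty ∧ A ≠ U ∧
    k = Multiset.card (cutEdges (induced E U) A)}

/-- Strength `γ_H(e)`: the maximum of `λ(H[U])` over all `U` with `e ⊆ U ⊆ V`. -/
noncomputable def strength (E : Multiset (Finset V)) (e : Finset V) : ℕ :=
  (Finset.univ.powerset.filter (fun U => e ⊆ U)).sup (lam E)

/-- The graph on `V` joining two distinct vertices that lie in a common edge of `E`;
its connectivity notions are those of the hypergraph. -/
def toGraph (E : Multiset (Finset V)) : SimpleGraph V where
  Adj u v := u ≠ v ∧ ∃ e ∈ E, u ∈ e ∧ v ∈ e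
  symm := ⟨by rintro u v ⟨h, e, he, hu, hv⟩; exact ⟨h.symm, e, he, hv, hu⟩⟩
  loopless := ⟨by rintro v ⟨h, -⟩; exact h rfl⟩

/-- `κ(H)`: the number of connected components of the hypergraph. -/
noncomputable def kappa (E : Multiset (Finset V)) : ℕ :=
  Nat.card (toGraph E).ConnectedComponent

/-- The vertex map contracting the edge `e'` to its representative vertex `v0 ∈ e'`. -/
def contractMap (e' : Finset V) (v0 : V) : V → V := fun u => if u ∈ e' then v0 else u

/-- The hypergraph `H/e'` obtained by contracting the edge `e'` (to the representative
vertex `v0 ∈ e'`): edges contained in `e'` are removed, all other edges are replaced by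
their image under the contraction. -/
def contract (E : Multiset (Finset V)) (e' : Finset V) (v0 : V) : Multiset (Finset V) :=
  (E.filter (fun f => ¬ f ⊆ e')).map (fun f => f.image (contractMap e' v0))

/-- The degree of a vertex: the number of edges (with multiplicity) containing it. -/
def degree (E : Multiset (Finset V)) (v : V) : ℕ :=
  Multiset.card (E.filter (fun e => v ∈ e))

/-
Proof idea: we prove the sharper bound `∑_{e ∈ E} 1/γ_H(e) ≤ n - 1`, so the strength itself is an
approximate strength function. Split a vertex set `U` along a minimum cut `(A, U \ A)` of `H[U]`.
Every edge of `H[U]` lies in `H[A]`, in `H[U \ A]` or in the cut, and each of the `λ(H[U])` cut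
edges has strength at least `λ(H[U])`, so the cut contributes at most `1`. Induction on `|U|` gives
`(|A| - 1) + (|U \ A| - 1) + 1 = |U| - 1`.
-/

theorem Multiset.sum_map_one_div_le_one {α : Type*} {s : Multiset α} {f : α → ℕ}
    (h : ∀ x ∈ s, Multiset.card s ≤ f x) :
    (s.map fun x => 1 / (f x : ℝ)).sum ≤ 1 := by
  rcases s.empty_or_exists_mem with rfl | ⟨y, hy⟩
  · simp
  have hcard : (0 : ℝ) < Multiset.card s := by
    exact_mod_cast Multiset.card_pos_iff_exists_mem.mpr ⟨y, hy⟩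
  calc (s.map fun x => 1 / (f x : ℝ)).sum
      ≤ Multiset.card (s.map fun x => 1 / (f x : ℝ)) • (1 / (Multiset.card s : ℝ)) := by
        refine Multiset.sum_le_card_nsmul _ _ fun _ hz => ?_
        obtain ⟨x, hx, rfl⟩ := Multiset.mem_map.mp hz
        exact one_div_le_one_div_of_le hcard (by exact_mod_cast h x hx)
    _ = 1 := by rw [Multiset.card_map, nsmul_eq_mul, mul_one_div_cancel hcard.ne']

@[simp]
theorem induced_univ (E : Multiset (Finset V)) : induced E Finset.univ = E :=
  Multiset.filter_eq_self.mpr fun e _ => Finset.subset_univ e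

theorem lam_le_strength (E : Multiset (Finset V)) {e U : Finset V} (heU : e ⊆ U) :
    lam E U ≤ strength E e :=
  Finset.le_sup (by simp [heU])

omit [Fintype V] in
theorem exists_card_cutEdges_eq_lam (E : Multiset (Finset V)) {U : Finset V}
    (hU : 1 < U.card) :
    ∃ A ⊆ U, A.Nonempty ∧ A ≠ U ∧ Multiset.card (cutEdges (induced E U) A) = lam E U := by
  obtain ⟨x, hx⟩ := Finset.card_pos.mp (Nat.zero_lt_of_lt hU)
  have hx_ne : ({x} : Finset V) ≠ U := fun h => by simp [← h] at hU
  have hmin : lam E U ∈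
      {k | ∃ A ⊆ U, A.Nonempty ∧ A ≠ U ∧ k = Multiset.card (cutEdges (induced E U) A)} :=
    Nat.sInf_mem
      ⟨_, {x}, Finset.singleton_subset_iff.mpr hx, Finset.singleton_nonempty x, hx_ne, rfl⟩
  obtain ⟨A, hAU, hA, hAne, hcut⟩ := hmin
  exact ⟨A, hAU, hA, hAne, hcut.symm⟩

theorem one_le_strength {E : Multiset (Finset V)} {e : Finset V} (he : e ∈ E)
    (he_card : 2 ≤ e.card) : 1 ≤ strength E e := by
  obtain ⟨A, hAe, ⟨x, hx⟩, hAne, hcut⟩ := exists_card_cutEdges_eq_lam E he_card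
  have he_cut : e ∈ cutEdges (induced E e) A := by
    simp only [cutEdges, induced, Multiset.mem_filter]
    exact ⟨⟨he, subset_rfl⟩, ⟨x, Finset.mem_inter.mpr ⟨hAe hx, hx⟩⟩,
      Finset.sdiff_nonempty.mpr fun h => hAne (hAe.antisymm h)⟩
  calc 1 ≤ lam E e := hcut ▸ Multiset.card_pos_iff_exists_mem.mpr ⟨e, he_cut⟩
    _ ≤ strength E e := lam_le_strength E subset_rfl

omit [Fintype V] in
theorem induced_eq_add_add_cutEdges {E : Multiset (Finset V)} (hE : ∀ e ∈ E, e.Nonempty)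
    {A U : Finset V} (hAU : A ⊆ U) :
    induced E U = induced E A + induced E (U \ A) + cutEdges (induced E U) A := by
  ext e
  by_cases heE : e ∈ E
  · have hA_disj : e ⊆ A → ¬Disjoint e A := fun h hd =>
      (hE e heE).ne_empty (Finset.disjoint_self_iff_empty e |>.mp (hd.mono_right h))
    have hU_of_A : e ⊆ A → e ⊆ U := fun h => h.trans hAU
    simp only [induced, cutEdges, Multiset.count_add, Multiset.count_filter, Finset.subset_sdiff,
      ← Finset.not_disjoint_iff_nonempty_inter, Finset.sdiff_nonempty]
    split_ifs <;> simp_all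
  · simp [Multiset.count_eq_zero_of_notMem, heE, induced, cutEdges]

theorem sum_one_div_strength_induced_le {E : Multiset (Finset V)} (hE : ∀ e ∈ E, 2 ≤ e.card)
    {U : Finset V} (hU : U.Nonempty) :
    ((induced E U).map fun e => 1 / (strength E e : ℝ)).sum ≤ U.card - 1 := by
  induction U using Finset.strongInduction with
  | H U ih =>
  by_cases hU1 : U.card ≤ 1
  · have hempty : induced E U = 0 := Multiset.filter_eq_nil.mpr fun e he heU => by
      have := Finset.card_le_card heU
      have := hE e he
      omega
    have : (1 : ℝ) ≤ U.card := by exact_mod_cast hU.card_pos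
    simpa [hempty] using this
  obtain ⟨A, hAU, hA, hAne, hcut⟩ := exists_card_cutEdges_eq_lam E (not_le.mp hU1)
  have hB : (U \ A).Nonempty := Finset.sdiff_nonempty.mpr fun h => hAne (hAU.antisymm h)
  have hsumA := ih A (Finset.ssubset_iff_subset_ne.mpr ⟨hAU, hAne⟩) hA
  have hsumB := ih (U \ A) (Finset.sdiff_ssubset hAU hA) hB
  have hsum_cut : ((cutEdges (induced E U) A).map fun e => 1 / (strength E e : ℝ)).sum ≤ 1 :=
    Multiset.sum_map_one_div_le_one fun e he => hcut ▸ lam_le_strength E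
      (Multiset.mem_filter.mp (Multiset.mem_filter.mp he).1).2
  have hcard : ((U \ A).card : ℝ) + A.card = U.card := by
    exact_mod_cast Finset.card_sdiff_add_card_eq_card hAU
  rw [induced_eq_add_add_cutEdges (fun e he => Finset.card_pos.mp (by have := hE e he; omega)) hAU]
  simp only [Multiset.map_add, Multiset.sum_add]
  linarith

/-- every rank-`r` hypergraph on `n ≥ 1` vertices admits an
`O(r)`-approximate strength function `γ'`: it lower bounds the true strength and
`∑_{e ∈ E} 1/γ'(e) ≤ 8·r·(n-1)`. -/
theorem approx_strength_exists (E : Multiset (Finset V))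
    (hE : ∀ e ∈ E, 2 ≤ e.card) (r : ℕ) (hr : ∀ e ∈ E, e.card ≤ r)
    (hn : 1 ≤ Fintype.card V) :
    ∃ γ' : Finset V → ℕ, (∀ e ∈ E, 1 ≤ γ' e) ∧
      (∀ e ∈ E, γ' e ≤ strength E e) ∧
      (E.map (fun e => (1 : ℝ) / (γ' e : ℝ))).sum ≤
        8 * (r : ℝ) * ((Fintype.card V : ℝ) - 1) := by
  refine ⟨strength E, fun e he => one_le_strength he (hE e he), fun _ _ => le_rfl, ?_⟩
  have hn' : (0 : ℝ) ≤ Fintype.card V - 1 := by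
    have : (1 : ℝ) ≤ Fintype.card V := by exact_mod_cast hn
    linarith
  rcases E.empty_or_exists_mem with rfl | ⟨e, he⟩
  · simpa using by positivity
  have : Nonempty V := Fintype.card_pos_iff.mp hn
  have hr2 : (2 : ℝ) ≤ r := by exact_mod_cast (hE e he).trans (hr e he)
  calc (E.map fun e => 1 / (strength E e : ℝ)).sum ≤ Fintype.card V - 1 := by
        simpa using sum_one_div_strength_induced_le hE Finset.univ_nonempty
    _ ≤ 8 * r * (Fintype.card V - 1) := le_mul_of_one_le_left hn' (by linarith)
end

section
/- Let H = (V, E) be a hypergraph on n vertices and k a positive integer. The number of k-weak edges of H (edges e with γ_H(e) < k), counted with multiplicity, is at most k·(n − κ(H)). -/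
/- A hypergraph on a finite vertex type `V` is given by a multiset `E` of edges,
each edge a `Finset V` (with at least 2 vertices, stated as a hypothesis). -/

variable {V : Type*} [Fintype V] [DecidableEq V]

/- Argue by induction on the number of edges. If some cut `δ(B)` is nonempty but
has fewer than `k` edges, delete it: the number of components grows, and every `k`-weak edge
either lies in `δ(B)` or stays `k`-weak after the deletion, since strength can only drop.
Otherwise every nonempty cut has at least `k` edges, and then every edge is `k`-strong,
witnessed by the vertex set of its connected component. -/

def removeCut (E : Multiset (Finset V)) (B : Finset V) : Multiset (Finset V) :=
  E.filter (fun f => ¬((f ∩ B).Nonempty ∧ (f \ B).Nonempty))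

section Components

omit [DecidableEq V]

omit [Fintype V] in
lemma toGraph_mono {E' E : Multiset (Finset V)} (h : E' ≤ E) : toGraph E' ≤ toGraph E :=
  fun _ _ ⟨hne, f, hf, hu, hv⟩ => ⟨hne, f, Multiset.mem_of_le h hf, hu, hv⟩

lemma kappa_le_card (E : Multiset (Finset V)) : kappa E ≤ Fintype.card V :=
  Nat.card_eq_fintype_card (α := V) ▸
    Nat.card_le_card_of_surjective _ fun c => c.exists_rep

lemma kappa_lt_of_le {E' E : Multiset (Finset V)} (hle : E' ≤ E) {u v : V}
    (huv : (toGraph E).Reachable u v) (hnot : ¬(toGraph E').Reachable u v) :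
    kappa E < kappa E' := by
  let φ := SimpleGraph.ConnectedComponent.map (SimpleGraph.Hom.ofLE (toGraph_mono hle))
  have hφ : ¬ Function.Injective φ := fun hinj => hnot <|
    SimpleGraph.ConnectedComponent.eq.mp (hinj (SimpleGraph.ConnectedComponent.eq.mpr huv))
  have := Fintype.ofFinite (toGraph E).ConnectedComponent
  have := Fintype.ofFinite (toGraph E').ConnectedComponent
  simpa only [kappa, Nat.card_eq_fintype_card] using
    Fintype.card_lt_of_surjective_not_injective φ
      (SimpleGraph.ConnectedComponent.surjective_map_ofLE _) hφ

end Components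

section Cuts

omit [Fintype V]

lemma mem_iff_mem_of_reachable {E : Multiset (Finset V)} {A : Finset V}
    (hA : cutEdges E A = 0) {u v : V} (h : (toGraph E).Reachable u v) : u ∈ A ↔ v ∈ A := by
  obtain ⟨w⟩ := h
  induction w with
  | nil => rfl
  | cons hadj _ ih =>
    obtain ⟨-, f, hf, hu, hv⟩ := hadj
    have hf_uncut : ¬((f ∩ A).Nonempty ∧ (f \ A).Nonempty) := fun hcross =>
      Multiset.notMem_zero f (hA ▸ Multiset.mem_filter.mpr ⟨hf, hcross⟩)
    refine Iff.trans ⟨fun huA => ?_, fun hvA => ?_⟩ ih <;> by_contra hnot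
    · exact hf_uncut ⟨⟨_, Finset.mem_inter.mpr ⟨hu, huA⟩⟩,
        ⟨_, Finset.mem_sdiff.mpr ⟨hv, hnot⟩⟩⟩
    · exact hf_uncut ⟨⟨_, Finset.mem_inter.mpr ⟨hv, hvA⟩⟩,
        ⟨_, Finset.mem_sdiff.mpr ⟨hu, hnot⟩⟩⟩

lemma cutEdges_add_removeCut (E : Multiset (Finset V)) (B : Finset V) :
    cutEdges E B + removeCut E B = E :=
  Multiset.filter_add_not _ E

lemma removeCut_le (E : Multiset (Finset V)) (B : Finset V) : removeCut E B ≤ E :=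
  Multiset.filter_le _ E

lemma removeCut_lt {E : Multiset (Finset V)} {B : Finset V} (h : cutEdges E B ≠ 0) :
    removeCut E B < E := by
  conv_rhs => rw [← cutEdges_add_removeCut E B]
  exact lt_add_of_pos_left _ (pos_iff_ne_zero.mpr h)

lemma cutEdges_removeCut (E : Multiset (Finset V)) (B : Finset V) :
    cutEdges (removeCut E B) B = 0 := by
  rw [cutEdges, removeCut, Multiset.filter_filter, Multiset.filter_eq_nil]
  exact fun _ _ h => h.2 h.1

end Cuts

lemma kappa_lt_kappa_removeCut {E : Multiset (Finset V)} {B : Finset V}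
    (h : cutEdges E B ≠ 0) : kappa E < kappa (removeCut E B) := by
  obtain ⟨f, hf⟩ := Multiset.exists_mem_of_ne_zero h
  obtain ⟨hfE, ⟨x, hx⟩, ⟨y, hy⟩⟩ := Multiset.mem_filter.mp hf
  rw [Finset.mem_inter] at hx
  rw [Finset.mem_sdiff] at hy
  have hxy : (toGraph E).Adj x y := ⟨fun h => hy.2 (h ▸ hx.2), f, hfE, hx.1, hy.1⟩
  refine kappa_lt_of_le (removeCut_le E B) hxy.reachable fun hreach => hy.2 ?_
  exact (mem_iff_mem_of_reachable (cutEdges_removeCut E B) hreach).mp hx.2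

section Strength

omit [Fintype V] in
lemma lam_mono {E' E : Multiset (Finset V)} (h : E' ≤ E) (U : Finset V) :
    lam E' U ≤ lam E U := by
  by_cases hS : ∃ A : Finset V, A ⊆ U ∧ A.Nonempty ∧ A ≠ U
  · obtain ⟨A₀, hA₀, hne₀, hAU₀⟩ := hS
    obtain ⟨A, hA, hne, hAU, hlam⟩ :=
      (Nat.sInf_mem ⟨_, A₀, hA₀, hne₀, hAU₀, rfl⟩ : lam E U ∈ _)
    calc lam E' U ≤ Multiset.card (cutEdges (induced E' U) A) :=
          Nat.sInf_le ⟨A, hA, hne, hAU, rfl⟩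
      _ ≤ Multiset.card (cutEdges (induced E U) A) :=
          Multiset.card_le_card (Multiset.filter_le_filter _ (Multiset.filter_le_filter _ h))
      _ = lam E U := hlam.symm
  · push Not at hS
    have hempty : {k : ℕ | ∃ A : Finset V, A ⊆ U ∧ A.Nonempty ∧ A ≠ U ∧
        k = Multiset.card (cutEdges (induced E' U) A)} = ∅ :=
      Set.eq_empty_of_forall_notMem fun _ ⟨A, hA, hne, hAU, _⟩ => hAU (hS A hA hne)
    rw [lam, hempty, Nat.sInf_empty]
    exact Nat.zero_le _

lemma strength_mono {E' E : Multiset (Finset V)} (h : E' ≤ E) (e : Finset V) :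
    strength E' e ≤ strength E e :=
  Finset.sup_mono_fun fun U _ => lam_mono h U

omit [Fintype V] in
lemma cutEdges_induced_of_closed {E : Multiset (Finset V)} {U A : Finset V}
    (hU : ∀ f ∈ E, (f ∩ U).Nonempty → f ⊆ U) (hA : A ⊆ U) :
    cutEdges (induced E U) A = cutEdges E A := by
  rw [cutEdges, induced, Multiset.filter_filter]
  refine Multiset.filter_congr fun f hf => and_iff_left_of_imp fun ⟨⟨x, hx⟩, _⟩ => ?_
  rw [Finset.mem_inter] at hx
  exact hU f hf ⟨x, Finset.mem_inter.mpr ⟨hx.1, hA hx.2⟩⟩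

omit [Fintype V] in
lemma le_lam_of_forall_cut {E : Multiset (Finset V)} {k : ℕ}
    (hcut : ∀ B, cutEdges E B ≠ 0 → k ≤ Multiset.card (cutEdges E B)) {U : Finset V}
    (hclosed : ∀ f ∈ E, (f ∩ U).Nonempty → f ⊆ U)
    (hconn : ∀ u ∈ U, ∀ v ∈ U, (toGraph E).Reachable u v) (hU : 1 < U.card) :
    k ≤ lam E U := by
  obtain ⟨u, hu⟩ := Finset.card_pos.mp (by omega : 0 < U.card)
  refine le_csInf ⟨_, {u}, by simpa using hu, Finset.singleton_nonempty u, ?_, rfl⟩ ?_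
  · rintro rfl
    simp at hU
  · rintro _ ⟨A, hAU, ⟨a, ha⟩, hAne, rfl⟩
    rw [cutEdges_induced_of_closed hclosed hAU]
    obtain ⟨v, hvU, hvA⟩ := Finset.exists_of_ssubset (hAU.ssubset_of_ne hAne)
    exact hcut A fun h0 => hvA ((mem_iff_mem_of_reachable h0 (hconn a (hAU ha) v hvU)).mp ha)

lemma le_strength_of_forall_cut {E : Multiset (Finset V)} {k : ℕ}
    (hcut : ∀ B, cutEdges E B ≠ 0 → k ≤ Multiset.card (cutEdges E B)) {e : Finset V}
    (he : e ∈ E) (he2 : 2 ≤ e.card) : k ≤ strength E e := by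
  classical
  obtain ⟨v₀, hv₀⟩ := Finset.card_pos.mp (by omega : 0 < e.card)
  set U : Finset V := {w | (toGraph E).Reachable v₀ w}
  have hclosed : ∀ f ∈ E, (f ∩ U).Nonempty → f ⊆ U := by
    rintro f hf ⟨x, hx⟩ y hy
    simp only [U, Finset.mem_inter, Finset.mem_filter, Finset.mem_univ, true_and] at hx ⊢
    rcases eq_or_ne x y with rfl | hxy
    · exact hx.2
    · exact hx.2.trans (SimpleGraph.Adj.reachable ⟨hxy, f, hf, hx.1, hy⟩)
  have heU : e ⊆ U := hclosed e he ⟨v₀, by simp [U, hv₀]⟩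
  have hconn : ∀ u ∈ U, ∀ v ∈ U, (toGraph E).Reachable u v := by
    simp only [U, Finset.mem_filter, Finset.mem_univ, true_and]
    exact fun u hu v hv => hu.symm.trans hv
  calc k ≤ lam E U :=
        le_lam_of_forall_cut hcut hclosed hconn (he2.trans (Finset.card_le_card heU))
    _ ≤ strength E e := Finset.le_sup (by simpa using heU)

end Strength

lemma card_weak_le_card_cutEdges_add (E : Multiset (Finset V)) (B : Finset V) (k : ℕ) :
    Multiset.card (E.filter (fun e => strength E e < k)) ≤
      Multiset.card (cutEdges E B) +
        Multiset.card ((removeCut E B).filter (fun e => strength (removeCut E B) e < k)) := by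
  have hsplit := congrArg (fun F => Multiset.card (F.filter (fun e => strength E e < k)))
    (cutEdges_add_removeCut E B)
  simp only [Multiset.filter_add, Multiset.card_add] at hsplit
  rw [← hsplit]
  gcongr
  · exact Multiset.filter_le _ _
  · exact Multiset.monotone_filter_right _
      fun e he => (strength_mono (removeCut_le E B) e).trans_lt he

theorem card_weak_edges_le_general (E : Multiset (Finset V)) (hE : ∀ e ∈ E, 2 ≤ e.card)
    (k : ℕ) :
    Multiset.card (E.filter (fun e => strength E e < k)) ≤
      k * (Fintype.card V - kappa E) := by
  induction E using Multiset.strongInductionOn with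
  | ih E IH =>
  by_cases hsmall : ∃ B, cutEdges E B ≠ 0 ∧ Multiset.card (cutEdges E B) < k
  · obtain ⟨B, hB, hBk⟩ := hsmall
    have hIH := IH _ (removeCut_lt hB) fun e he => hE e (Multiset.mem_of_le (removeCut_le E B) he)
    have hκ := kappa_lt_kappa_removeCut hB
    have hκV := kappa_le_card (removeCut E B)
    calc _ ≤ _ := card_weak_le_card_cutEdges_add E B k
      _ ≤ k + k * (Fintype.card V - kappa (removeCut E B)) := by omega
      _ = k * (Fintype.card V - kappa (removeCut E B) + 1) := by ring
      _ ≤ k * (Fintype.card V - kappa E) := Nat.mul_le_mul_left k (by omega)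
  · push Not at hsmall
    rw [Multiset.filter_eq_nil.mpr fun e he =>
      (le_strength_of_forall_cut hsmall he (hE e he)).not_gt]
    simp

/-- the number of `k`-weak edges (counted with multiplicity) is at most
`k·(n - κ(H))`. -/
theorem card_weak_edges_le (E : Multiset (Finset V)) (hE : ∀ e ∈ E, 2 ≤ e.card)
    (k : ℕ) (hk : 0 < k) :
    Multiset.card (E.filter (fun e => strength E e < k)) ≤
      k * (Fintype.card V - kappa E) :=
  card_weak_edges_le_general E hE k
end

section
/- Let H = (V, E) be a hypergraph and A, B ⊆ V sets with |A| ≥ 2, |B| ≥ 2, and A ∩ B ≠ ∅. Then λ(H[A ∪ B]) ≥ min(λ(H[A]), λ(H[B])); that is, edge-connectivity of induced subhypergraphs satisfies this triangle-type inequality on overlapping vertex sets. -/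
/- A hypergraph on a finite vertex type `V` is given by a multiset `E` of edges,
each edge a `Finset V` (with at least 2 vertices, stated as a hypothesis). -/

variable {V : Type*} [Fintype V] [DecidableEq V]

/- A cut `S` of `H[A ∪ B]` and its complement cross the same edges, so we may assume
`S` avoids a fixed vertex `x ∈ A ∩ B`. Pick `y ∈ S`; if `y ∈ A`, then `S ∩ A` is a nonempty proper
subset of `A` (it misses `x`), and every edge of `H[A]` crossing `S ∩ A` is an edge of
`H[A ∪ B]` crossing `S`. Hence `λ(H[A]) ≤ |δ(S)|`, and symmetrically when `y ∈ B`. -/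

section EdgeConnectivity

omit [Fintype V]

variable (E : Multiset (Finset V)) {U S : Finset V}

theorem cutEdges_induced_sdiff :
    cutEdges (induced E U) (U \ S) = cutEdges (induced E U) S := by
  unfold cutEdges
  refine Multiset.filter_congr fun e he => ?_
  have heU : e ⊆ U := (Multiset.mem_filter.1 he).2
  constructor
  · rintro ⟨⟨v, hv⟩, ⟨w, hw⟩⟩
    simp only [Finset.mem_inter, Finset.mem_sdiff, not_and, not_not] at hv hw
    exact ⟨⟨w, Finset.mem_inter.2 ⟨hw.1, hw.2 (heU hw.1)⟩⟩, ⟨v, Finset.mem_sdiff.2 ⟨hv.1, hv.2.2⟩⟩⟩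
  · rintro ⟨⟨v, hv⟩, ⟨w, hw⟩⟩
    simp only [Finset.mem_inter, Finset.mem_sdiff] at hv hw
    exact ⟨⟨w, Finset.mem_inter.2 ⟨hw.1, Finset.mem_sdiff.2 ⟨heU hw.1, hw.2⟩⟩⟩,
      ⟨v, Finset.mem_sdiff.2 ⟨hv.1, fun h => (Finset.mem_sdiff.1 h).2 hv.2⟩⟩⟩

theorem card_cutEdges_induced_inter_le {A : Finset V} (hAU : A ⊆ U) (S : Finset V) :
    Multiset.card (cutEdges (induced E A) (S ∩ A)) ≤
      Multiset.card (cutEdges (induced E U) S) := by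
  apply Multiset.card_le_card
  unfold cutEdges induced
  rw [Multiset.filter_filter, Multiset.filter_filter]
  refine Multiset.monotone_filter_right _ fun e ⟨⟨⟨v, hv⟩, ⟨w, hw⟩⟩, heA⟩ => ?_
  simp only [Finset.mem_inter, Finset.mem_sdiff, not_and] at hv hw
  exact ⟨⟨⟨v, Finset.mem_inter.2 ⟨hv.1, hv.2.1⟩⟩,
    ⟨w, Finset.mem_sdiff.2 ⟨hw.1, fun hwS => hw.2 hwS (heA hw.1)⟩⟩⟩, heA.trans hAU⟩

theorem lam_le_card_cutEdges (hSU : S ⊆ U) (hS : S.Nonempty) (hSneU : S ≠ U) :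
    lam E U ≤ Multiset.card (cutEdges (induced E U) S) :=
  Nat.sInf_le ⟨S, hSU, hS, hSneU, rfl⟩

theorem le_lam_of_forall_notMem {m : ℕ} {x : V} (hxU : x ∈ U) (hU : 2 ≤ U.card)
    (h : ∀ S ⊆ U, S.Nonempty → x ∉ S → m ≤ Multiset.card (cutEdges (induced E U) S)) :
    m ≤ lam E U := by
  obtain ⟨z, hzU, hzx⟩ := Finset.exists_mem_ne hU x
  refine le_csInf ⟨_, {x}, Finset.singleton_subset_iff.2 hxU, Finset.singleton_nonempty x,
    fun hxU' => hzx (Finset.mem_singleton.1 (hxU' ▸ hzU)), rfl⟩ ?_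
  rintro k ⟨S, hSU, hS, hSneU, rfl⟩
  by_cases hxS : x ∈ S
  · obtain ⟨w, hwU, hwS⟩ := Finset.exists_of_ssubset (hSU.ssubset_of_ne hSneU)
    rw [← cutEdges_induced_sdiff]
    exact h _ Finset.sdiff_subset ⟨w, Finset.mem_sdiff.2 ⟨hwU, hwS⟩⟩
      fun hx => (Finset.mem_sdiff.1 hx).2 hxS
  · exact h S hSU hS hxS

theorem lam_le_card_cutEdges_of_subset {A : Finset V} {x y : V} (hAU : A ⊆ U) (hxA : x ∈ A)
    (hxS : x ∉ S) (hyS : y ∈ S) (hyA : y ∈ A) :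
    lam E A ≤ Multiset.card (cutEdges (induced E U) S) := by
  refine (lam_le_card_cutEdges E Finset.inter_subset_right ⟨y, Finset.mem_inter.2 ⟨hyS, hyA⟩⟩
    fun hSA => hxS (Finset.mem_inter.1 (hSA ▸ hxA)).1).trans ?_
  exact card_cutEdges_induced_inter_le E hAU S

end EdgeConnectivity

theorem lam_union_ge_min_general (E : Multiset (Finset V))
    (A B : Finset V) (hA : 2 ≤ A.card) (hAB : (A ∩ B).Nonempty) :
    min (lam E A) (lam E B) ≤ lam E (A ∪ B) := by
  obtain ⟨x, hx⟩ := hAB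
  rw [Finset.mem_inter] at hx
  have hUcard : 2 ≤ (A ∪ B).card := hA.trans (Finset.card_le_card Finset.subset_union_left)
  refine le_lam_of_forall_notMem E (Finset.mem_union_left B hx.1) hUcard ?_
  rintro S hSU ⟨y, hyS⟩ hxS
  rcases Finset.mem_union.1 (hSU hyS) with hyA | hyB
  · exact (min_le_left _ _).trans
      (lam_le_card_cutEdges_of_subset E Finset.subset_union_left hx.1 hxS hyS hyA)
  · exact (min_le_right _ _).trans
      (lam_le_card_cutEdges_of_subset E Finset.subset_union_right hx.2 hxS hyS hyB)

/-- for overlapping vertex sets `A, B` (each of size at least 2),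
`λ(H[A ∪ B]) ≥ min(λ(H[A]), λ(H[B]))`. -/
theorem lam_union_ge_min (E : Multiset (Finset V)) (hE : ∀ e ∈ E, 2 ≤ e.card)
    (A B : Finset V) (hA : 2 ≤ A.card) (hB : 2 ≤ B.card) (hAB : (A ∩ B).Nonempty) :
    min (lam E A) (lam E B) ≤ lam E (A ∪ B) :=
  lam_union_ge_min_general E A B hA hAB
end

section
/- Let H = (V, E) be a connected hypergraph with |V| ≥ 2 and let A ⊊ V be a minimum cut, i.e., a nonempty proper subset with |δ_H(A)| = λ(H), where λ(H) = λ(H[V]). Then every edge e ∈ δ_H(A) satisfies γ_H(e) = λ(H). -/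
/- A hypergraph on a finite vertex type `V` is given by a multiset `E` of edges,
each edge a `Finset V` (with at least 2 vertices, stated as a hypothesis). -/

variable {V : Type*} [Fintype V] [DecidableEq V]

/- Any `U ⊇ e` is split by the crossing edge `e` into `A ∩ U` and `U \ A`, and the edges of
`H[U]` crossing `A ∩ U` cross `A`; so `λ(H[U]) ≤ |δ_H(A)| = λ(H)`, while `U = V` attains it. -/

omit [Fintype V] in
theorem lam_le_card_cutEdges_induced {E : Multiset (Finset V)} {U A : Finset V}
    (hAU : A ⊆ U) (hA : A.Nonempty) (hAne : A ≠ U) :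
    lam E U ≤ Multiset.card (cutEdges (induced E U) A) :=
  Nat.sInf_le ⟨A, hAU, hA, hAne, rfl⟩

omit [Fintype V] in
theorem cutEdges_induced_inter_le (E : Multiset (Finset V)) (A U : Finset V) :
    cutEdges (induced E U) (A ∩ U) ≤ cutEdges E A := by
  rw [cutEdges, induced, Multiset.filter_filter, cutEdges]
  refine Multiset.monotone_filter_right _ fun f ⟨⟨⟨x, hx⟩, ⟨y, hy⟩⟩, hfU⟩ => ⟨⟨x, ?_⟩, ⟨y, ?_⟩⟩
  · simp only [Finset.mem_inter] at hx ⊢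
    exact ⟨hx.1, hx.2.1⟩
  · simp only [Finset.mem_sdiff, Finset.mem_inter, not_and] at hy ⊢
    exact ⟨hy.1, fun h => hy.2 h (hfU hy.1)⟩

omit [Fintype V] in
theorem lam_le_card_cutEdges_of_mem {E : Multiset (Finset V)} {A U e : Finset V}
    (he : e ∈ cutEdges E A) (heU : e ⊆ U) :
    lam E U ≤ Multiset.card (cutEdges E A) := by
  obtain ⟨-, ⟨x, hx⟩, ⟨y, hy⟩⟩ := Multiset.mem_filter.1 he
  rw [Finset.mem_inter] at hx
  rw [Finset.mem_sdiff] at hy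
  have hsplit_nonempty : (A ∩ U).Nonempty := ⟨x, Finset.mem_inter.2 ⟨hx.2, heU hx.1⟩⟩
  have hsplit_ne : A ∩ U ≠ U := fun h =>
    hy.2 (Finset.mem_inter.1 (h.symm ▸ heU hy.1 : y ∈ A ∩ U)).1
  calc lam E U ≤ Multiset.card (cutEdges (induced E U) (A ∩ U)) :=
        lam_le_card_cutEdges_induced Finset.inter_subset_right hsplit_nonempty hsplit_ne
    _ ≤ Multiset.card (cutEdges E A) := Multiset.card_le_card (cutEdges_induced_inter_le E A U)

theorem strength_le_card_cutEdges {E : Multiset (Finset V)} {A e : Finset V}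
    (he : e ∈ cutEdges E A) : strength E e ≤ Multiset.card (cutEdges E A) :=
  Finset.sup_le fun _ hU => lam_le_card_cutEdges_of_mem he (Finset.mem_filter.1 hU).2

theorem lam_univ_le_strength (E : Multiset (Finset V)) (e : Finset V) :
    lam E Finset.univ ≤ strength E e :=
  Finset.le_sup (f := lam E) (Finset.mem_filter.2 ⟨Finset.mem_powerset.2 le_rfl, e.subset_univ⟩)

theorem strength_eq_mincut_on_mincut_edges_general (E : Multiset (Finset V))
    (A : Finset V)
    (hmin : Multiset.card (cutEdges E A) = lam E Finset.univ) :
    ∀ e ∈ cutEdges E A, strength E e = lam E Finset.univ := fun e he =>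
  le_antisymm (hmin ▸ strength_le_card_cutEdges he) (lam_univ_le_strength E e)

/-- in a connected hypergraph with at least 2 vertices, every edge
crossing a minimum cut `A` has strength exactly `λ(H)` (where `λ(H) = λ(H[V])`). -/
theorem strength_eq_mincut_on_mincut_edges (E : Multiset (Finset V))
    (hE : ∀ e ∈ E, 2 ≤ e.card) (hconn : (toGraph E).Connected)
    (hn : 2 ≤ Fintype.card V) (A : Finset V) (hA : A.Nonempty)
    (hAne : A ≠ Finset.univ)
    (hmin : Multiset.card (cutEdges E A) = lam E Finset.univ) :
    ∀ e ∈ cutEdges E A, strength E e = lam E Finset.univ :=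
  strength_eq_mincut_on_mincut_edges_general E A hmin
end
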